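/- arXiv:2307.09741 — 6 statements merged into one kernel-verified Lean document; each statement's English description precedes it below -/
import Mathlib

section
/- The 6-Göbel sequence satisfies: g_{6,n} ∈ ℤ_(19) for 1 ≤ n ≤ 18, the residue of g_{6,18} modulo 19 is 16, and g_{6,19} ∉ ℤ_(19); in particular g_{6,19} is not an integer. -/
/-- `g` is the `k`-Göbel sequence: `g 0 = 1` and `n * g n = 1 + ∑_{j<n} (g j)^k` for `n ≥ 1`. -/
def IsGobel (k : ℕ) (g : ℕ → ℚ) : Prop :=
  g 0 = 1 ∧ ∀ n : ℕ, 1 ≤ n → (n : ℚ) * g n = 1 + ∑ j ∈ Finset.range n, g j ^ k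

/-- `x ∈ ℤ_(p)`, the localization of `ℤ` at the prime `p`: the reduced denominator of `x`
is not divisible by `p`. -/
def InZp (p : ℕ) (x : ℚ) : Prop := ¬ (p : ℕ) ∣ x.den

/-- `x ≡ y (mod p^j)` in `ℤ_(p)`: the difference divided by `p^j` still lies in `ℤ_(p)`. -/
def CongrZp (p j : ℕ) (x y : ℚ) : Prop := InZp p ((x - y) / (p : ℚ) ^ j)

/-- Residues of the 6-Göbel sequence modulo 19. -/
def res : ℕ → ℤ
  | 0 => 1 | 1 => 2 | 2 => 14 | 3 => 18 | 4 => 9 | 5 => 17 | 6 => 9 | 7 => 12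
  | 8 => 13 | 9 => 17 | 10 => 16 | 11 => 10 | 12 => 18 | 13 => 5 | 14 => 16
  | 15 => 4 | 16 => 8 | 17 => 2 | 18 => 16 | _ => 0

/-- `x ∈ ℤ_(19)` and `x ≡ r (mod 19)`, witnessed by a fraction `a / b`. -/
def Good (x : ℚ) (r : ℤ) : Prop :=
  ∃ a b : ℤ, ¬ (19:ℤ) ∣ b ∧ (b:ℚ) * x = (a:ℚ) ∧ (19:ℤ) ∣ (a - b * r)

lemma prime19 : Prime (19 : ℤ) := by norm_num

lemma good_one : Good 1 1 := ⟨1, 1, by decide, by norm_num, by decide⟩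

lemma good_zero : Good 0 0 := ⟨0, 1, by decide, by norm_num, by decide⟩

lemma good_add {x y : ℚ} {r s : ℤ} (hx : Good x r) (hy : Good y s) :
    Good (x + y) (r + s) := by
  obtain ⟨a1, b1, hb1, h1, c1, hc1⟩ := hx
  obtain ⟨a2, b2, hb2, h2, c2, hc2⟩ := hy
  refine ⟨a1 * b2 + a2 * b1, b1 * b2, ?_, ?_, ⟨b2 * c1 + b1 * c2, by linear_combination b2 * hc1 + b1 * hc2⟩⟩
  · intro h; rcases (prime19.dvd_mul.mp h) with h | h <;> [exact hb1 h; exact hb2 h]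
  · push_cast
    linear_combination (b2 : ℚ) * h1 + (b1 : ℚ) * h2

lemma good_mul {x y : ℚ} {r s : ℤ} (hx : Good x r) (hy : Good y s) :
    Good (x * y) (r * s) := by
  obtain ⟨a1, b1, hb1, h1, c1, hc1⟩ := hx
  obtain ⟨a2, b2, hb2, h2, c2, hc2⟩ := hy
  refine ⟨a1 * a2, b1 * b2, ?_, ?_, ⟨a2 * c1 + b1 * r * c2, by linear_combination a2 * hc1 + b1 * r * hc2⟩⟩
  · intro h; rcases (prime19.dvd_mul.mp h) with h | h <;> [exact hb1 h; exact hb2 h]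
  · push_cast
    linear_combination (b2 : ℚ) * y * h1 + (a1 : ℚ) * h2

lemma good_pow {x : ℚ} {r : ℤ} (hx : Good x r) (k : ℕ) : Good (x ^ k) (r ^ k) := by
  induction k with
  | zero => simpa using good_one
  | succ k ih => rw [pow_succ, pow_succ]; exact good_mul ih hx

lemma good_sum {f : ℕ → ℚ} {u : ℕ → ℤ} {n : ℕ}
    (h : ∀ j, j < n → Good (f j) (u j)) :
    Good (∑ j ∈ Finset.range n, f j) (∑ j ∈ Finset.range n, u j) := by
  induction n with
  | zero => simpa using good_zero
  | succ n ih =>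
      rw [Finset.sum_range_succ, Finset.sum_range_succ]
      exact good_add (ih fun j hj => h j (by omega)) (h n (by omega))

lemma good_div {x y : ℚ} {r s : ℤ} {n : ℕ} (hy : Good y s)
    (hxy : (n : ℚ) * x = y) (hn : ¬ (19:ℤ) ∣ (n : ℤ))
    (hrs : (19:ℤ) ∣ (s - (n : ℤ) * r)) : Good x r := by
  obtain ⟨a, b, hb, h1, c, hc⟩ := hy
  obtain ⟨d, hd⟩ := hrs
  refine ⟨a, b * n, ?_, ?_, ⟨c + b * d, by linear_combination hc + b * hd⟩⟩
  · intro h; rcases (prime19.dvd_mul.mp h) with h | h <;> [exact hb h; exact hn h]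
  · push_cast
    linear_combination (b : ℚ) * hxy + h1

lemma inZp_of {x : ℚ} {a b : ℤ} (hb : ¬ (19:ℤ) ∣ b) (h : (b:ℚ) * x = (a:ℚ)) :
    InZp 19 x := by
  have hb0 : b ≠ 0 := by rintro rfl; exact hb ⟨0, by ring⟩
  have hx : x = (a : ℚ) / (b : ℚ) := by
    field_simp at h ⊢; linarith
  intro hdvd
  apply hb
  have hden : ((x.den : ℤ)) ∣ b := by rw [hx, ← Rat.divInt_eq_div]; exact Rat.den_dvd a b
  exact dvd_trans (by exact_mod_cast hdvd) hden

lemma good_inZp {x : ℚ} {r : ℤ} (hx : Good x r) : InZp 19 x := by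
  obtain ⟨a, b, hb, h1, _⟩ := hx
  exact inZp_of hb h1

lemma good_congr {x : ℚ} {r : ℤ} (hx : Good x r) : CongrZp 19 1 x (r : ℚ) := by
  obtain ⟨a, b, hb, h1, c, hc⟩ := hx
  unfold CongrZp
  apply inZp_of (a := c) hb
  have hq : (a : ℚ) - (b : ℚ) * (r : ℚ) = 19 * (c : ℚ) := by exact_mod_cast hc
  rw [pow_one, mul_div_assoc', div_eq_iff (by norm_num : ((19:ℕ):ℚ) ≠ 0)]
  push_cast
  linear_combination h1 + hq

lemma res_dvd : ∀ n : ℕ, n < 19 → 1 ≤ n →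
    (19:ℤ) ∣ (1 + ∑ j ∈ Finset.range n, res j ^ 6 - (n : ℤ) * res n) := by decide

lemma res_dvd19 : (19:ℤ) ∣ (1 + ∑ j ∈ Finset.range 19, res j ^ 6 - 10) := by decide

theorem goebel_six_not_integral (g : ℕ → ℚ) (hg : IsGobel 6 g) :
    (∀ n : ℕ, 1 ≤ n → n ≤ 18 → InZp 19 (g n)) ∧
      CongrZp 19 1 (g 18) 16 ∧ ¬ InZp 19 (g 19) ∧ ¬ ∃ z : ℤ, g 19 = (z : ℚ) := by
  have key : ∀ n : ℕ, n ≤ 18 → Good (g n) (res n) := by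
    intro n
    induction n using Nat.strong_induction_on with
    | _ n ih =>
      intro hn
      match n, hn with
      | 0, _ => rw [hg.1]; exact good_one
      | (m+1), hn =>
        have hrec := hg.2 (m+1) (by omega)
        have hsum : Good (1 + ∑ j ∈ Finset.range (m+1), g j ^ 6)
            (1 + ∑ j ∈ Finset.range (m+1), res j ^ 6) :=
          good_add good_one (good_sum fun j hj =>
            good_pow (ih j (by omega) (by omega)) 6)
        refine good_div hsum hrec ?_ ?_
        · intro h
          have : (19:ℕ) ∣ (m+1) := by exact_mod_cast h
          omega
        · exact res_dvd (m+1) (by omega) (by omega)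
  have hS : Good (1 + ∑ j ∈ Finset.range 19, g j ^ 6) 10 := by
    obtain ⟨a, b, hb, h1, c, hc⟩ :=
      good_add good_one (good_sum (u := fun j => res j ^ 6) (n := 19)
        fun j hj => good_pow (key j (by omega)) 6)
    obtain ⟨d, hd⟩ := res_dvd19
    exact ⟨a, b, hb, h1, ⟨c + b * d, by linear_combination hc + b * hd⟩⟩
  have hrec19 := hg.2 19 (by omega)
  have hnot : ¬ InZp 19 (g 19) := by
    intro hZ
    obtain ⟨a, b, hb, h1, c, hc⟩ := hS
    rw [← hrec19] at h1
    -- (b * 19) * g 19 = a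
    have ha19 : ¬ (19:ℤ) ∣ a := by
      intro h
      have : (19:ℤ) ∣ b * 10 := ⟨a / 19 - c, by
        obtain ⟨e, he⟩ := h
        rw [he] at hc ⊢
        rw [Int.mul_ediv_cancel_left _ (by norm_num)]
        linarith⟩
      rcases prime19.dvd_mul.mp this with h' | h'
      · exact hb h'
      · norm_num at h'
    have hnum : (b * 19) * g 19 = (a : ℚ) := by push_cast at h1 ⊢; linarith
    have hcross : (b * 19) * (g 19).num = a * ((g 19).den : ℤ) := by
      have hden : ((g 19).den : ℚ) * g 19 = ((g 19).num : ℚ) := by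
        rw [mul_comm]; exact_mod_cast Rat.mul_den_eq_num (g 19)
      have : ((b * 19 : ℤ) : ℚ) * ((g 19).num : ℚ) = (a : ℚ) * ((g 19).den : ℚ) := by
        calc ((b * 19 : ℤ) : ℚ) * ((g 19).num : ℚ)
            = ((g 19).den : ℚ) * (((b * 19 : ℤ) : ℚ) * g 19) := by rw [← hden]; push_cast; ring
          _ = (a : ℚ) * ((g 19).den : ℚ) := by push_cast at hnum ⊢; rw [hnum]; ring
      exact_mod_cast this
    have : (19:ℤ) ∣ a * ((g 19).den : ℤ) := ⟨b * (g 19).num, by linarith⟩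
    rcases prime19.dvd_mul.mp this with h' | h'
    · exact ha19 h'
    · exact hZ (by exact_mod_cast h')
  refine ⟨fun n h1 h2 => good_inZp (key n h2), ?_, hnot, ?_⟩
  · have := good_congr (key 18 (by omega))
    simpa [res] using this
  · rintro ⟨z, hz⟩
    apply hnot
    unfold InZp
    rw [hz, Rat.den_intCast]
    norm_num
end

section
/- For integers k, ℓ with 2 ≤ k ≤ ℓ and k ≡ ℓ (mod 18), the residues of the ℓ-Göbel and k-Göbel sequences modulo 19 agree: for all 1 ≤ n ≤ 18, g_{k,n} ∈ ℤ_(19) iff g_{ℓ,n} ∈ ℤ_(19), and when both lie in ℤ_(19) they are congruent modulo 19. -/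
section aux
variable {p : ℕ} [hp : Fact (Nat.Prime p)]

lemma inZp_iff (x : ℚ) : InZp p x ↔ ‖(x : ℚ_[p])‖ ≤ 1 := by
  constructor
  · exact fun h => Padic.norm_rat_le_one h
  · intro h hdvd
    have hu := PadicInt.isUnit_den x h
    rw [PadicInt.isUnit_iff] at hu
    have h2 : ‖((x.den : ℤ) : ℤ_[p])‖ < 1 := by
      rw [PadicInt.norm_int_lt_one_iff_dvd]
      exact_mod_cast hdvd
    rw [Int.cast_natCast] at h2
    rw [hu] at h2
    exact lt_irrefl _ h2

lemma congrZp_iff (x y : ℚ) : CongrZp p 1 x y ↔ ‖(x : ℚ_[p]) - (y : ℚ_[p])‖ ≤ (p : ℝ)⁻¹ := by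
  have hp0 : (0 : ℝ) < (p : ℝ)⁻¹ := by
    have := hp.out.pos
    positivity
  rw [CongrZp, inZp_iff]
  have : (((x - y) / (p : ℚ) ^ 1 : ℚ) : ℚ_[p]) = ((x : ℚ_[p]) - y) / (p : ℚ_[p]) := by
    push_cast; ring
  rw [this, norm_div, Padic.norm_p, div_le_one hp0]

lemma toZMod_eq_iff_norm (a b : ℤ_[p]) :
    PadicInt.toZMod a = PadicInt.toZMod b ↔ ‖a - b‖ ≤ (p : ℝ)⁻¹ := by
  have h1 : ‖a - b‖ ≤ (p : ℝ)⁻¹ ↔ ‖a - b‖ ≤ (p : ℝ) ^ (-(1 : ℕ) : ℤ) := by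
    norm_num
  rw [h1, PadicInt.norm_le_pow_iff_mem_span_pow, pow_one, ← PadicInt.maximalIdeal_eq_span_p,
    ← PadicInt.ker_toZMod, RingHom.mem_ker, map_sub, sub_eq_zero]

end aux

lemma zmod_pow_eq {p : ℕ} [hp : Fact (Nat.Prime p)] (c : ZMod p) {k l : ℕ}
    (hk : 1 ≤ k) (hkl : k ≤ l) (hmod : k ≡ l [MOD (p - 1)]) : c ^ k = c ^ l := by
  obtain ⟨m, hm⟩ := (Nat.modEq_iff_dvd' hkl).mp hmod
  have hl : l = k + (p - 1) * m := by omega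
  rcases eq_or_ne c 0 with rfl | hc
  · rw [zero_pow (by omega), zero_pow (by omega)]
  · rw [hl, pow_add, pow_mul, ZMod.pow_card_sub_one_eq_one hc, one_pow, mul_one]

instance fact19 : Fact (Nat.Prime 19) := ⟨by norm_num⟩

lemma key_term {k l : ℕ} (hk : 1 ≤ k) (hkl : k ≤ l) (hmod : k ≡ l [MOD 18])
    (a b : ℚ_[19]) (ha : ‖a‖ ≤ 1) (hb : ‖b‖ ≤ 1) (hab : ‖a - b‖ ≤ (19 : ℝ)⁻¹) :
    ‖a ^ k - b ^ l‖ ≤ (19 : ℝ)⁻¹ := by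
  set A : ℤ_[19] := ⟨a, ha⟩
  set B : ℤ_[19] := ⟨b, hb⟩
  have hAB : PadicInt.toZMod A = PadicInt.toZMod B := by
    rw [toZMod_eq_iff_norm]
    rw [PadicInt.norm_def]
    exact_mod_cast hab
  have h2 : PadicInt.toZMod (A ^ k) = PadicInt.toZMod (B ^ l) := by
    rw [map_pow, map_pow, hAB]
    exact zmod_pow_eq _ hk hkl (by exact_mod_cast hmod)
  rw [toZMod_eq_iff_norm, PadicInt.norm_def] at h2
  have hc : ((A ^ k - B ^ l : ℤ_[19]) : ℚ_[19]) = a ^ k - b ^ l := by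
    push_cast
    rfl
  rw [hc] at h2
  exact_mod_cast h2

theorem goebel_periodicity_mod_19 (k l : ℕ) (hk : 2 ≤ k) (hkl : k ≤ l)
    (hmod : k ≡ l [MOD 18]) (g h : ℕ → ℚ) (hg : IsGobel k g) (hh : IsGobel l h) :
    ∀ n : ℕ, 1 ≤ n → n ≤ 18 →
      (InZp 19 (g n) ↔ InZp 19 (h n)) ∧
      (InZp 19 (g n) → InZp 19 (h n) → CongrZp 19 1 (g n) (h n)) := by
  obtain ⟨hg0, hgrec⟩ := hg
  obtain ⟨hh0, hhrec⟩ := hh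
  have hnorm_n : ∀ n : ℕ, 1 ≤ n → n ≤ 18 → ‖(n : ℚ_[19])‖ = 1 := by
    intro n h1 h18
    refine le_antisymm ?_ ?_
    · exact_mod_cast Padic.norm_int_le_one (p := 19) (n : ℤ)
    · by_contra hlt
      push_neg at hlt
      have h2 : ‖((n : ℤ) : ℚ_[19])‖ < 1 := by exact_mod_cast hlt
      rw [Padic.norm_intCast_lt_one_iff] at h2
      have h3 : (19 : ℕ) ∣ n := by exact_mod_cast h2
      omega
  have main : ∀ n : ℕ, n ≤ 18 →
      ‖((g n : ℚ) : ℚ_[19])‖ ≤ 1 ∧ ‖((h n : ℚ) : ℚ_[19])‖ ≤ 1 ∧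
      ‖((g n : ℚ) : ℚ_[19]) - ((h n : ℚ) : ℚ_[19])‖ ≤ (19 : ℝ)⁻¹ := by
    intro n
    induction n using Nat.strong_induction_on with
    | _ n ih =>
      intro hn18
      rcases Nat.eq_zero_or_pos n with rfl | hn
      · rw [hg0, hh0]
        norm_num
      · have hGe : (n : ℚ_[19]) * ((g n : ℚ) : ℚ_[19]) =
            1 + ∑ j ∈ Finset.range n, ((g j : ℚ) : ℚ_[19]) ^ k := by
          have := congrArg (fun x : ℚ => (x : ℚ_[19])) (hgrec n hn)
          push_cast at this ⊢
          exact this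
        have hHe : (n : ℚ_[19]) * ((h n : ℚ) : ℚ_[19]) =
            1 + ∑ j ∈ Finset.range n, ((h j : ℚ) : ℚ_[19]) ^ l := by
          have := congrArg (fun x : ℚ => (x : ℚ_[19])) (hhrec n hn)
          push_cast at this ⊢
          exact this
        have hnn := hnorm_n n hn hn18
        have ihj : ∀ j ∈ Finset.range n,
            ‖((g j : ℚ) : ℚ_[19])‖ ≤ 1 ∧ ‖((h j : ℚ) : ℚ_[19])‖ ≤ 1 ∧
            ‖((g j : ℚ) : ℚ_[19]) - ((h j : ℚ) : ℚ_[19])‖ ≤ (19 : ℝ)⁻¹ := by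
          intro j hj
          rw [Finset.mem_range] at hj
          exact ih j hj (by omega)
        have hGnorm : ‖((g n : ℚ) : ℚ_[19])‖ ≤ 1 := by
          have := congrArg (fun x : ℚ_[19] => ‖x‖) hGe
          simp only [norm_mul, hnn, one_mul] at this
          rw [this]
          refine (IsUltrametricDist.norm_add_le_max _ _).trans (max_le (by norm_num) ?_)
          refine IsUltrametricDist.norm_sum_le_of_forall_le_of_nonneg zero_le_one ?_
          intro j hj
          rw [norm_pow]
          exact pow_le_one₀ (norm_nonneg _) (ihj j hj).1
        have hHnorm : ‖((h n : ℚ) : ℚ_[19])‖ ≤ 1 := by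
          have := congrArg (fun x : ℚ_[19] => ‖x‖) hHe
          simp only [norm_mul, hnn, one_mul] at this
          rw [this]
          refine (IsUltrametricDist.norm_add_le_max _ _).trans (max_le (by norm_num) ?_)
          refine IsUltrametricDist.norm_sum_le_of_forall_le_of_nonneg zero_le_one ?_
          intro j hj
          rw [norm_pow]
          exact pow_le_one₀ (norm_nonneg _) (ihj j hj).2.1
        refine ⟨hGnorm, hHnorm, ?_⟩
        have hdiff : (n : ℚ_[19]) * (((g n : ℚ) : ℚ_[19]) - ((h n : ℚ) : ℚ_[19])) =
            ∑ j ∈ Finset.range n,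
              (((g j : ℚ) : ℚ_[19]) ^ k - ((h j : ℚ) : ℚ_[19]) ^ l) := by
          rw [mul_sub, hGe, hHe, Finset.sum_sub_distrib]
          ring
        have := congrArg (fun x : ℚ_[19] => ‖x‖) hdiff
        simp only [norm_mul, hnn, one_mul] at this
        rw [this]
        refine IsUltrametricDist.norm_sum_le_of_forall_le_of_nonneg (by positivity) ?_
        intro j hj
        exact key_term (by omega) hkl hmod _ _ (ihj j hj).1 (ihj j hj).2.1 (ihj j hj).2.2
  intro n h1 h18
  obtain ⟨h1g, h1h, hdiff⟩ := main n h18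
  refine ⟨⟨fun _ => (inZp_iff _).2 h1h, fun _ => (inZp_iff _).2 h1g⟩,
    fun _ _ => (congrZp_iff _ _).2 ?_⟩
  exact_mod_cast hdiff
end

section
/- For every integer k ≥ 2 with k ≡ 6 (mod 18), the term g_{k,19} of the k-Göbel sequence is not an integer, i.e., N_k = 19 when k ≡ 6 (mod 18). -/
namespace Goebel19

instance : Fact (Nat.Prime 19) := ⟨by norm_num⟩

/-- A rational is `19`-good if its reduced denominator is not divisible by `19`. -/
def Good (x : ℚ) : Prop := ((x.den : ZMod 19) ≠ 0)

lemma good_iff (x : ℚ) : Good x ↔ ¬ (19 ∣ x.den) := by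
  rw [Good, Ne, ZMod.natCast_eq_zero_iff]

lemma good_one : Good 1 := by simp [Good]
lemma good_zero : Good 0 := by simp [Good]

lemma good_add {x y : ℚ} (hx : Good x) (hy : Good y) : Good (x + y) := by
  rw [good_iff] at *
  intro h
  rcases (Nat.Prime.dvd_mul (by norm_num)).1 (h.trans (Rat.add_den_dvd x y)) with h' | h'
  exacts [hx h', hy h']

lemma good_mul {x y : ℚ} (hx : Good x) (hy : Good y) : Good (x * y) := by
  rw [good_iff] at *
  intro h
  rcases (Nat.Prime.dvd_mul (by norm_num)).1 (h.trans (Rat.mul_den_dvd x y)) with h' | h'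
  exacts [hx h', hy h']

lemma good_pow {x : ℚ} (hx : Good x) (m : ℕ) : Good (x ^ m) := by
  induction m with
  | zero => simpa using good_one
  | succ m ih => rw [pow_succ]; exact good_mul ih hx

lemma cast_pow {x : ℚ} (hx : Good x) (m : ℕ) :
    ((x ^ m : ℚ) : ZMod 19) = (x : ZMod 19) ^ m := by
  induction m with
  | zero => simp
  | succ m ih =>
      rw [pow_succ, Rat.cast_mul_of_ne_zero (good_pow hx m) hx, ih, pow_succ]

lemma good_sum_cast (f : ℕ → ℚ) (n : ℕ) (h : ∀ j < n, Good (f j)) :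
    Good (∑ j ∈ Finset.range n, f j) ∧
      ((∑ j ∈ Finset.range n, f j : ℚ) : ZMod 19)
        = ∑ j ∈ Finset.range n, ((f j : ℚ) : ZMod 19) := by
  induction n with
  | zero => simpa using good_zero
  | succ n ih =>
      obtain ⟨h1, h2⟩ := ih (fun j hj => h j (hj.trans (Nat.lt_succ_self n)))
      have hfn := h n (Nat.lt_succ_self n)
      rw [Finset.sum_range_succ, Finset.sum_range_succ]
      exact ⟨good_add h1 hfn, by rw [Rat.cast_add_of_ne_zero h1 hfn, h2]⟩

/-- The residues of the `6`-Göbel sequence modulo `19`. -/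
def r : ℕ → ZMod 19 := fun n =>
  [1, 2, 14, 18, 9, 17, 9, 12, 13, 17, 16, 10, 18, 5, 16, 4, 8, 2, 16].getD n 0

lemma pow_eq_pow_six {k : ℕ} (hk : 2 ≤ k) (hmod : k ≡ 6 [MOD 18]) (a : ZMod 19) :
    a ^ k = a ^ 6 := by
  have h18 : k % 18 = 6 := hmod
  obtain ⟨m, hm⟩ : ∃ m, k = 18 * m + 6 := ⟨k / 18, by omega⟩
  by_cases ha : a = 0
  · subst ha; rw [zero_pow (by omega : k ≠ 0), zero_pow (by norm_num : (6:ℕ) ≠ 0)]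
  · have h1 : a ^ 18 = 1 := by
      have := ZMod.pow_card_sub_one_eq_one ha
      norm_num at this
      exact this
    rw [hm, pow_add, pow_mul, h1, one_pow, one_mul]

theorem goebel_key (k : ℕ) (hk : 2 ≤ k) (hmod : k ≡ 6 [MOD 18])
    (g : ℕ → ℚ) (hg : g 0 = 1 ∧ ∀ n : ℕ, 1 ≤ n →
      (n : ℚ) * g n = 1 + ∑ j ∈ Finset.range n, g j ^ k) :
    ∀ n, n ≤ 18 → Good (g n) ∧ ((g n : ℚ) : ZMod 19) = r n := by
  intro n
  induction n using Nat.strong_induction_on with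
  | _ n ih =>
    intro hn18
    rcases Nat.eq_zero_or_pos n with rfl | hn1
    · rw [hg.1]; exact ⟨good_one, by simp [r]⟩
    have hprev : ∀ j < n, Good (g j ^ k) := fun j hj =>
      good_pow ((ih j hj (by omega)).1) k
    obtain ⟨hSg, hSc⟩ := good_sum_cast (fun j => g j ^ k) n hprev
    set S : ℚ := 1 + ∑ j ∈ Finset.range n, g j ^ k with hS
    have hSgood : Good S := good_add good_one hSg
    have hScast : (S : ZMod 19) = 1 + ∑ j ∈ Finset.range n, r j ^ 6 := by
      rw [hS, Rat.cast_add_of_ne_zero good_one hSg, Rat.cast_one, hSc]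
      congr 1
      refine Finset.sum_congr rfl fun j hj => ?_
      rw [Finset.mem_range] at hj
      rw [cast_pow (ih j hj (by omega)).1, (ih j hj (by omega)).2,
        pow_eq_pow_six hk hmod]
    have hnz : ((n : ℕ) : ZMod 19) ≠ 0 := by
      rw [Ne, ZMod.natCast_eq_zero_iff]
      intro h
      have := Nat.le_of_dvd hn1 h
      omega
    have hnq : (n : ℚ) ≠ 0 := Nat.cast_ne_zero.mpr (by omega)
    have hgn : g n = S / (n : ℚ) := by
      field_simp
      rw [mul_comm]
      exact hg.2 n hn1
    have hinvden : ((n:ℚ)⁻¹).den ∣ n := by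
      have h2 := Rat.den_dvd (1:ℤ) (n:ℤ)
      rw [Rat.inv_def, Rat.num_natCast, Rat.den_natCast]
      exact_mod_cast h2
    have hinvgood : Good ((n:ℚ)⁻¹) := by
      rw [good_iff]
      intro hdvd
      rw [Ne, ZMod.natCast_eq_zero_iff] at hnz
      exact hnz (hdvd.trans hinvden)
    have hgood : Good (g n) := by
      rw [hgn, div_eq_mul_inv]
      exact good_mul hSgood hinvgood
    have hcast : ((g n : ℚ) : ZMod 19)
        = (n : ZMod 19)⁻¹ * (1 + ∑ j ∈ Finset.range n, r j ^ 6) := by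
      rw [hgn, Rat.cast_div_of_ne_zero hSgood (by rw [Rat.num_natCast]; exact_mod_cast hnz),
        hScast, Rat.cast_natCast, div_eq_inv_mul]
    have hrn : (n : ZMod 19) * r n = 1 + ∑ j ∈ Finset.range n, r j ^ 6 := by
      interval_cases n <;> decide
    refine ⟨hgood, ?_⟩
    rw [hcast, ← hrn, inv_mul_cancel_left₀ hnz]

end Goebel19

theorem goebel_not_integral_six_mod_18 (k : ℕ) (hk : 2 ≤ k) (hmod : k ≡ 6 [MOD 18])
    (g : ℕ → ℚ) (hg : IsGobel k g) : ¬ ∃ z : ℤ, g 19 = (z : ℚ) := by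
  obtain ⟨hg0, hgr⟩ := hg
  rintro ⟨z, hz⟩
  have key := Goebel19.goebel_key k hk hmod g ⟨hg0, hgr⟩
  have hprev : ∀ j < 19, Goebel19.Good (g j ^ k) := fun j hj =>
    Goebel19.good_pow (key j (by omega)).1 k
  obtain ⟨hSg, hSc⟩ := Goebel19.good_sum_cast (fun j => g j ^ k) 19 hprev
  have h19 := hgr 19 (by norm_num)
  have hScast : ((1 + ∑ j ∈ Finset.range 19, g j ^ k : ℚ) : ZMod 19)
      = 1 + ∑ j ∈ Finset.range 19, Goebel19.r j ^ 6 := by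
    have hsum : ∑ j ∈ Finset.range 19, ((g j ^ k : ℚ) : ZMod 19)
        = ∑ j ∈ Finset.range 19, Goebel19.r j ^ 6 := by
      refine Finset.sum_congr rfl fun j hj => ?_
      rw [Finset.mem_range] at hj
      rw [Goebel19.cast_pow (key j (by omega)).1, (key j (by omega)).2,
        Goebel19.pow_eq_pow_six hk hmod]
    rw [Rat.cast_add_of_ne_zero Goebel19.good_one hSg, Rat.cast_one, hSc, hsum]
  have hz19 : (1 + ∑ j ∈ Finset.range 19, g j ^ k : ℚ) = ((19 * z : ℤ) : ℚ) := by
    rw [← h19, hz]; push_cast; ring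
  have hzero : ((1 + ∑ j ∈ Finset.range 19, g j ^ k : ℚ) : ZMod 19) = 0 := by
    rw [hz19, Rat.cast_intCast, Int.cast_mul]
    have h0 : ((19 : ℤ) : ZMod 19) = 0 := by decide
    rw [h0, zero_mul]
  rw [hScast] at hzero
  revert hzero
  decide
end

section
/- For every integer k ≥ 2 with k ≡ 14 (mod 18), g_{k,19} is not an integer. -/
open scoped Padic

instance fact_prime_19 : Fact (Nat.Prime 19) := ⟨by norm_num⟩

lemma coe_finset_sum (s : Finset ℕ) (f : ℕ → ℤ_[19]) :
    ((∑ j ∈ s, f j : ℤ_[19]) : ℚ_[19]) = ∑ j ∈ s, ((f j : ℤ_[19]) : ℚ_[19]) :=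
  map_sum (PadicInt.Coe.ringHom) f s

theorem goebel_not_integral_fourteen_mod_18 (k : ℕ) (hk : 2 ≤ k) (hmod : k ≡ 14 [MOD 18])
    (g : ℕ → ℚ) (hg : IsGobel k g) : ¬ ∃ z : ℤ, g 19 = (z : ℚ) := by
  rintro ⟨z, hz⟩
  obtain ⟨hg0, hrec⟩ := hg
  have hknz : k ≠ 0 := by omega
  -- All g n for n ≤ 18 are 19-adic integers
  have hnorm : ∀ n, n ≤ 18 → ‖((g n : ℚ) : ℚ_[19])‖ ≤ 1 := by
    intro n
    induction n using Nat.strong_induction_on with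
    | _ n ih =>
      intro hn
      rcases Nat.eq_zero_or_pos n with h0 | h1
      · subst h0; rw [hg0]; simp
      · have heq : ((n : ℚ_[19])) * ((g n : ℚ) : ℚ_[19])
            = 1 + ∑ j ∈ Finset.range n, ((g j : ℚ) : ℚ_[19]) ^ k := by
          exact_mod_cast congrArg (fun x : ℚ => (x : ℚ_[19])) (hrec n h1)
        have hsum : ‖(1 : ℚ_[19]) + ∑ j ∈ Finset.range n, ((g j : ℚ) : ℚ_[19]) ^ k‖ ≤ 1 := by
          refine le_trans (IsUltrametricDist.norm_add_le_max _ _) (max_le (by simp) ?_)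
          refine IsUltrametricDist.norm_sum_le_of_forall_le_of_nonneg zero_le_one ?_
          intro j hj
          rw [norm_pow]
          have hjn := Finset.mem_range.mp hj
          exact pow_le_one₀ (norm_nonneg _) (ih j hjn (by omega))
        have hn19 : ‖((n : ℕ) : ℚ_[19])‖ = 1 := by
          have h1' : ‖(((n : ℤ)) : ℚ_[19])‖ ≤ 1 := Padic.norm_int_le_one _
          have h2' : ¬ ‖(((n : ℤ)) : ℚ_[19])‖ < 1 := by
            rw [Padic.norm_intCast_lt_one_iff]
            intro hdvd
            have : (19 : ℕ) ∣ n := Int.ofNat_dvd.mp (by exact_mod_cast hdvd)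
            omega
          push_cast at h1' h2'
          exact le_antisymm h1' (not_lt.mp h2')
        calc ‖((g n : ℚ) : ℚ_[19])‖
            = ‖((n : ℕ) : ℚ_[19])‖ * ‖((g n : ℚ) : ℚ_[19])‖ := by rw [hn19, one_mul]
          _ = ‖((n : ℕ) : ℚ_[19]) * ((g n : ℚ) : ℚ_[19])‖ := (norm_mul _ _).symm
          _ ≤ 1 := heq ▸ hsum
  -- package as elements of ℤ_[19]
  set X : ℕ → ℤ_[19] := fun j =>
    if h : ‖((g j : ℚ) : ℚ_[19])‖ ≤ 1 then ⟨_, h⟩ else 0 with hXdef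
  have hX : ∀ j, j ≤ 18 → ((X j : ℤ_[19]) : ℚ_[19]) = ((g j : ℚ) : ℚ_[19]) := by
    intro j hj
    have hXj : X j = ⟨_, hnorm j hj⟩ := dif_pos (hnorm j hj)
    rw [hXj]
  set c : ℕ → ZMod 19 := fun j => PadicInt.toZMod (X j) with hcdef
  -- Fermat reduction of the exponent
  have hpow : ∀ j, c j ^ k = c j ^ 14 := by
    intro j
    by_cases h0 : c j = 0
    · rw [h0, zero_pow hknz, zero_pow (by norm_num)]
    · have h18 : c j ^ 18 = 1 := by
        have h := ZMod.pow_card_sub_one_eq_one (p := 19) h0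
        norm_num at h
        exact h
      have hk14 : k = 18 * (k / 18) + 14 := by
        have h1 := Nat.div_add_mod k 18
        have h2 : k % 18 = 14 := hmod
        omega
      calc c j ^ k = (c j ^ 18) ^ (k / 18) * c j ^ 14 := by
            rw [← pow_mul, ← pow_add, ← hk14]
        _ = c j ^ 14 := by rw [h18, one_pow, one_mul]
  have hv0 : c 0 = 1 := by
    have hX0 : X 0 = 1 := by
      apply Subtype.ext
      rw [hX 0 (by norm_num), hg0, PadicInt.coe_one]
      norm_num
    simp [hcdef, hX0]
  -- the recurrence modulo 19
  have hc : ∀ n, 1 ≤ n → n ≤ 18 →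
      ((n : ℕ) : ZMod 19) * c n = 1 + ∑ j ∈ Finset.range n, c j ^ 14 := by
    intro n h1 h2
    have hXeq : ((n : ℕ) : ℤ_[19]) * X n = 1 + ∑ j ∈ Finset.range n, X j ^ k := by
      apply Subtype.ext
      have hco : ((((1 : ℤ_[19]) + ∑ j ∈ Finset.range n, X j ^ k) : ℤ_[19]) : ℚ_[19])
          = 1 + ∑ j ∈ Finset.range n, ((X j : ℤ_[19]) : ℚ_[19]) ^ k := by
        rw [PadicInt.coe_add, PadicInt.coe_one, coe_finset_sum]
        exact congrArg (1 + ·) (Finset.sum_congr rfl fun j _ => PadicInt.coe_pow _ _)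
      show ((((n : ℕ) : ℤ_[19]) * X n : ℤ_[19]) : ℚ_[19]) = _
      rw [PadicInt.coe_mul, PadicInt.coe_natCast, hX n h2, hco]
      rw [Finset.sum_congr rfl (fun j hj => by
        rw [hX j (le_trans (Nat.le_of_lt_succ (Nat.lt_succ_of_lt (Finset.mem_range.mp hj))) h2)])]
      exact_mod_cast congrArg (fun x : ℚ => (x : ℚ_[19])) (hrec n h1)
    have h := congrArg (PadicInt.toZMod (p := 19)) hXeq
    simp only [map_mul, map_add, map_one, map_natCast, map_sum, map_pow] at h
    simp only [hcdef]
    rw [h]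
    exact congrArg (1 + ·) (Finset.sum_congr rfl fun j _ => hpow j)
  -- compute the residues
  have hv1 : c 1 = 2 := by
    have h := hc 1 (by norm_num) (by norm_num)
    simp only [Finset.sum_range_succ, Finset.sum_range_zero, hv0] at h
    exact mul_left_cancel₀ (show (((1:ℕ)) : ZMod 19) ≠ 0 by decide) (h.trans (by decide))
  have hv2 : c 2 = 4 := by
    have h := hc 2 (by norm_num) (by norm_num)
    simp only [Finset.sum_range_succ, Finset.sum_range_zero, hv0, hv1] at h
    exact mul_left_cancel₀ (show (((2:ℕ)) : ZMod 19) ≠ 0 by decide) (h.trans (by decide))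
  have hv3 : c 3 = 2 := by
    have h := hc 3 (by norm_num) (by norm_num)
    simp only [Finset.sum_range_succ, Finset.sum_range_zero, hv0, hv1, hv2] at h
    exact mul_left_cancel₀ (show (((3:ℕ)) : ZMod 19) ≠ 0 by decide) (h.trans (by decide))
  have hv4 : c 4 = 3 := by
    have h := hc 4 (by norm_num) (by norm_num)
    simp only [Finset.sum_range_succ, Finset.sum_range_zero, hv0, hv1, hv2, hv3] at h
    exact mul_left_cancel₀ (show (((4:ℕ)) : ZMod 19) ≠ 0 by decide) (h.trans (by decide))
  have hv5 : c 5 = 7 := by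
    have h := hc 5 (by norm_num) (by norm_num)
    simp only [Finset.sum_range_succ, Finset.sum_range_zero, hv0, hv1, hv2, hv3, hv4] at h
    exact mul_left_cancel₀ (show (((5:ℕ)) : ZMod 19) ≠ 0 by decide) (h.trans (by decide))
  have hv6 : c 6 = 14 := by
    have h := hc 6 (by norm_num) (by norm_num)
    simp only [Finset.sum_range_succ, Finset.sum_range_zero, hv0, hv1, hv2, hv3, hv4, hv5] at h
    exact mul_left_cancel₀ (show (((6:ℕ)) : ZMod 19) ≠ 0 by decide) (h.trans (by decide))
  have hv7 : c 7 = 16 := by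
    have h := hc 7 (by norm_num) (by norm_num)
    simp only [Finset.sum_range_succ, Finset.sum_range_zero, hv0, hv1, hv2, hv3, hv4, hv5, hv6] at h
    exact mul_left_cancel₀ (show (((7:ℕ)) : ZMod 19) ≠ 0 by decide) (h.trans (by decide))
  have hv8 : c 8 = 5 := by
    have h := hc 8 (by norm_num) (by norm_num)
    simp only [Finset.sum_range_succ, Finset.sum_range_zero, hv0, hv1, hv2, hv3, hv4, hv5, hv6, hv7] at h
    exact mul_left_cancel₀ (show (((8:ℕ)) : ZMod 19) ≠ 0 by decide) (h.trans (by decide))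
  have hv9 : c 9 = 16 := by
    have h := hc 9 (by norm_num) (by norm_num)
    simp only [Finset.sum_range_succ, Finset.sum_range_zero, hv0, hv1, hv2, hv3, hv4, hv5, hv6, hv7, hv8] at h
    exact mul_left_cancel₀ (show (((9:ℕ)) : ZMod 19) ≠ 0 by decide) (h.trans (by decide))
  have hv10 : c 10 = 11 := by
    have h := hc 10 (by norm_num) (by norm_num)
    simp only [Finset.sum_range_succ, Finset.sum_range_zero, hv0, hv1, hv2, hv3, hv4, hv5, hv6, hv7, hv8, hv9] at h
    exact mul_left_cancel₀ (show (((10:ℕ)) : ZMod 19) ≠ 0 by decide) (h.trans (by decide))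
  have hv11 : c 11 = 2 := by
    have h := hc 11 (by norm_num) (by norm_num)
    simp only [Finset.sum_range_succ, Finset.sum_range_zero, hv0, hv1, hv2, hv3, hv4, hv5, hv6, hv7, hv8, hv9, hv10] at h
    exact mul_left_cancel₀ (show (((11:ℕ)) : ZMod 19) ≠ 0 by decide) (h.trans (by decide))
  have hv12 : c 12 = 15 := by
    have h := hc 12 (by norm_num) (by norm_num)
    simp only [Finset.sum_range_succ, Finset.sum_range_zero, hv0, hv1, hv2, hv3, hv4, hv5, hv6, hv7, hv8, hv9, hv10, hv11] at h
    exact mul_left_cancel₀ (show (((12:ℕ)) : ZMod 19) ≠ 0 by decide) (h.trans (by decide))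
  have hv13 : c 13 = 2 := by
    have h := hc 13 (by norm_num) (by norm_num)
    simp only [Finset.sum_range_succ, Finset.sum_range_zero, hv0, hv1, hv2, hv3, hv4, hv5, hv6, hv7, hv8, hv9, hv10, hv11, hv12] at h
    exact mul_left_cancel₀ (show (((13:ℕ)) : ZMod 19) ≠ 0 by decide) (h.trans (by decide))
  have hv14 : c 14 = 5 := by
    have h := hc 14 (by norm_num) (by norm_num)
    simp only [Finset.sum_range_succ, Finset.sum_range_zero, hv0, hv1, hv2, hv3, hv4, hv5, hv6, hv7, hv8, hv9, hv10, hv11, hv12, hv13] at h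
    exact mul_left_cancel₀ (show (((14:ℕ)) : ZMod 19) ≠ 0 by decide) (h.trans (by decide))
  have hv15 : c 15 = 4 := by
    have h := hc 15 (by norm_num) (by norm_num)
    simp only [Finset.sum_range_succ, Finset.sum_range_zero, hv0, hv1, hv2, hv3, hv4, hv5, hv6, hv7, hv8, hv9, hv10, hv11, hv12, hv13, hv14] at h
    exact mul_left_cancel₀ (show (((15:ℕ)) : ZMod 19) ≠ 0 by decide) (h.trans (by decide))
  have hv16 : c 16 = 6 := by
    have h := hc 16 (by norm_num) (by norm_num)
    simp only [Finset.sum_range_succ, Finset.sum_range_zero, hv0, hv1, hv2, hv3, hv4, hv5, hv6, hv7, hv8, hv9, hv10, hv11, hv12, hv13, hv14, hv15] at h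
    exact mul_left_cancel₀ (show (((16:ℕ)) : ZMod 19) ≠ 0 by decide) (h.trans (by decide))
  have hv17 : c 17 = 16 := by
    have h := hc 17 (by norm_num) (by norm_num)
    simp only [Finset.sum_range_succ, Finset.sum_range_zero, hv0, hv1, hv2, hv3, hv4, hv5, hv6, hv7, hv8, hv9, hv10, hv11, hv12, hv13, hv14, hv15, hv16] at h
    exact mul_left_cancel₀ (show (((17:ℕ)) : ZMod 19) ≠ 0 by decide) (h.trans (by decide))
  have hv18 : c 18 = 9 := by
    have h := hc 18 (by norm_num) (by norm_num)
    simp only [Finset.sum_range_succ, Finset.sum_range_zero, hv0, hv1, hv2, hv3, hv4, hv5, hv6, hv7, hv8, hv9, hv10, hv11, hv12, hv13, hv14, hv15, hv16, hv17] at h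
    exact mul_left_cancel₀ (show (((18:ℕ)) : ZMod 19) ≠ 0 by decide) (h.trans (by decide))
  -- the final contradiction
  have hfin : (0 : ZMod 19) = 1 + ∑ j ∈ Finset.range 19, c j ^ 14 := by
    have hXeq : ((19 : ℕ) : ℤ_[19]) * (z : ℤ_[19]) = 1 + ∑ j ∈ Finset.range 19, X j ^ k := by
      apply Subtype.ext
      have hco : ((((1 : ℤ_[19]) + ∑ j ∈ Finset.range 19, X j ^ k) : ℤ_[19]) : ℚ_[19])
          = 1 + ∑ j ∈ Finset.range 19, ((X j : ℤ_[19]) : ℚ_[19]) ^ k := by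
        rw [PadicInt.coe_add, PadicInt.coe_one, coe_finset_sum]
        exact congrArg (1 + ·) (Finset.sum_congr rfl fun j _ => PadicInt.coe_pow _ _)
      show ((((19 : ℕ) : ℤ_[19]) * (z : ℤ_[19]) : ℤ_[19]) : ℚ_[19]) = _
      rw [PadicInt.coe_mul, PadicInt.coe_natCast, PadicInt.coe_intCast, hco]
      rw [Finset.sum_congr rfl (fun j hj => by
        rw [hX j (Nat.le_of_lt_succ (Finset.mem_range.mp hj))])]
      have h19 := hrec 19 (by norm_num)
      rw [hz] at h19
      exact_mod_cast congrArg (fun x : ℚ => (x : ℚ_[19])) h19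
    have h := congrArg (PadicInt.toZMod (p := 19)) hXeq
    simp only [map_mul, map_add, map_one, map_natCast, map_intCast, map_sum, map_pow] at h
    have h19z : (((19 : ℕ) : ZMod 19)) = 0 := by decide
    rw [h19z, zero_mul] at h
    simp only [hcdef]
    rw [h]
    exact congrArg (1 + ·) (Finset.sum_congr rfl fun j _ => hpow j)
  simp only [Finset.sum_range_succ, Finset.sum_range_zero, hv0, hv1, hv2, hv3, hv4, hv5, hv6, hv7, hv8, hv9, hv10, hv11, hv12, hv13, hv14, hv15, hv16, hv17, hv18] at hfin
  exact absurd hfin (by decide)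
end

section
/- Let p be prime and suppose g_{k,m} ∈ ℤ_(p) for all 1 ≤ m ≤ n-1 and g_{k,n-1} ≡ a (mod p^b) in ℤ_(p), where b ≥ ν_p(n). If a·(n-1+a^{k-1}) ≡ 0 (mod p^{ν_p(n)}), then g_{k,n} ∈ ℤ_(p), and if b > ν_p(n) then g_{k,n} ≡ a(n-1+a^{k-1})/p^{ν_p(n)} · (n/p^{ν_p(n)})^{-1} (mod p^{b-ν_p(n)}). -/
namespace GAux
variable {p : ℕ}

theorem inZp_one (hp : p.Prime) : InZp p 1 := by
  simp [InZp, Nat.dvd_one, hp.ne_one]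

theorem inZp_zero (hp : p.Prime) : InZp p 0 := by
  simp [InZp, Nat.dvd_one, hp.ne_one]

theorem inZp_add (hp : p.Prime) {x y : ℚ} (hx : InZp p x) (hy : InZp p y) :
    InZp p (x + y) := by
  intro h
  rcases (Nat.Prime.dvd_mul hp).1 (h.trans (Rat.add_den_dvd x y)) with h' | h'
  exacts [hx h', hy h']

theorem inZp_mul (hp : p.Prime) {x y : ℚ} (hx : InZp p x) (hy : InZp p y) :
    InZp p (x * y) := by
  intro h
  rcases (Nat.Prime.dvd_mul hp).1 (h.trans (Rat.mul_den_dvd x y)) with h' | h'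
  exacts [hx h', hy h']

theorem inZp_neg {x : ℚ} (hx : InZp p x) : InZp p (-x) := by
  simpa [InZp] using hx

def Zp (p : ℕ) (hp : p.Prime) : Subring ℚ where
  carrier := {x | InZp p x}
  one_mem' := inZp_one hp
  zero_mem' := inZp_zero hp
  add_mem' := inZp_add hp
  mul_mem' := inZp_mul hp
  neg_mem' := inZp_neg

theorem mem_Zp_iff (hp : p.Prime) {x : ℚ} : x ∈ Zp p hp ↔ InZp p x := Iff.rfl

theorem inZp_of_eq_div (hp : p.Prime) {x : ℚ} {A B : ℤ} (hB : ¬ (p:ℤ) ∣ B)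
    (hx : x = (A : ℚ) / B) : InZp p x := by
  have hB0 : B ≠ 0 := by rintro rfl; simp at hB
  intro h
  have hdvd : (x.den : ℤ) ∣ B := by
    rw [hx, ← Rat.divInt_eq_div]
    exact Rat.den_dvd A B
  exact hB ((Int.natCast_dvd_natCast.2 h).trans hdvd)

end GAux

namespace GAux

theorem inZp_div (hp : p.Prime) {x : ℚ} {B : ℤ} (hx : InZp p x) (hB : ¬ (p:ℤ) ∣ B) :
    InZp p (x / B) := by
  refine inZp_of_eq_div hp (A := x.num) (B := (x.den : ℤ) * B) ?_ ?_
  · intro h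
    rcases ((Nat.prime_iff_prime_int.mp hp).2.2 _ _ h) with h' | h'
    · exact hx (Int.natCast_dvd_natCast.1 h')
    · exact hB h'
  · rw [Int.cast_mul, ← div_div, Int.cast_natCast, Rat.num_div_den x]

end GAux

theorem goebel_step_mod_p (p : ℕ) (hp : p.Prime) (k : ℕ) (hk : 2 ≤ k)
    (g : ℕ → ℚ) (hg : IsGobel k g) (n : ℕ) (hn : 2 ≤ n)
    (hint : ∀ m : ℕ, 1 ≤ m → m ≤ n - 1 → InZp p (g m))
    (a : ℤ) (b : ℕ) (hb : padicValNat p n ≤ b)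
    (hcong : CongrZp p b (g (n - 1)) (a : ℚ))
    (hdvd : (p : ℤ) ^ padicValNat p n ∣ a * ((n : ℤ) - 1 + a ^ (k - 1))) :
    InZp p (g n) ∧
      (padicValNat p n < b → ∀ u : ℤ,
        ((n / p ^ padicValNat p n : ℕ) : ℤ) * u ≡ 1 [ZMOD (p : ℤ) ^ (b - padicValNat p n)] →
        CongrZp p (b - padicValNat p n) (g n)
          (((a : ℚ) * ((n : ℚ) - 1 + (a : ℚ) ^ (k - 1)) / (p : ℚ) ^ padicValNat p n) * (u : ℚ))) := by
  classical
  set ν := padicValNat p n with hνdef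
  have hn0 : n ≠ 0 := by omega
  have hpν : p ^ ν ∣ n := pow_padicValNat_dvd
  set m := n / p ^ ν with hmdef
  have hm : ¬ p ∣ m := by
    have h := Nat.not_dvd_ordCompl hp hn0
    rwa [Nat.factorization_def n hp] at h
  have hnm : p ^ ν * m = n := Nat.mul_div_cancel' hpν
  have hm0 : m ≠ 0 := by
    intro h; rw [h, Nat.mul_zero] at hnm; exact hn0 hnm.symm
  have hp0 : (p : ℚ) ≠ 0 := by exact_mod_cast hp.ne_zero
  have hmq0 : (m : ℚ) ≠ 0 := by exact_mod_cast hm0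
  have hPb0 : ((p:ℚ)) ^ b ≠ 0 := pow_ne_zero _ hp0
  have hPν0 : ((p:ℚ)) ^ ν ≠ 0 := pow_ne_zero _ hp0
  -- recurrence: n * g n = g (n-1) * ((n-1) + g(n-1)^(k-1))
  have h1 := hg.2 n (by omega)
  have h2 := hg.2 (n - 1) (by omega)
  have hcast : ((n-1 : ℕ) : ℚ) = (n : ℚ) - 1 := by
    have h : (1:ℕ) ≤ n := by omega
    push_cast [h]; ring
  rw [hcast] at h2
  have hrec : (n : ℚ) * g n = g (n-1) * (((n : ℚ) - 1) + g (n-1) ^ (k-1)) := by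
    have hs : ∑ j ∈ Finset.range n, g j ^ k
        = (∑ j ∈ Finset.range (n-1), g j ^ k) + g (n-1) ^ k := by
      have hn1 : n - 1 + 1 = n := by omega
      conv_lhs => rw [← hn1]
      rw [Finset.sum_range_succ]
    have hpk : g (n-1) ^ k = g (n-1) ^ (k-1) * g (n-1) := by
      rw [← pow_succ]; congr 1; omega
    rw [h1, hs]
    linear_combination hpk - h2
  -- write g (n-1) = a + p^b * t with t ∈ Zp
  obtain ⟨t, htZ, hPt⟩ : ∃ t : ℚ, InZp p t ∧ (p:ℚ) ^ b * t = g (n-1) - (a:ℚ) :=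
    ⟨_, hcong, mul_div_cancel₀ _ hPb0⟩
  -- geometric sum identity
  set C : ℚ := ∑ i ∈ Finset.range (k-1), g (n-1) ^ i * (a:ℚ) ^ (k-1-1-i) with hCdef
  have hgeom : C * (g (n-1) - (a:ℚ)) = g (n-1) ^ (k-1) - (a:ℚ) ^ (k-1) :=
    geom_sum₂_mul _ _ _
  set s : ℚ := t * ((n:ℚ) - 1) + t * g (n-1) ^ (k-1) + (a:ℚ) * (t * C) with hsdef
  have hsZ : s ∈ GAux.Zp p hp := by
    have htm : t ∈ GAux.Zp p hp := htZ
    have hg1 : g (n-1) ∈ GAux.Zp p hp := hint (n-1) (by omega) le_rfl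
    have hCm : C ∈ GAux.Zp p hp := by
      refine Subring.sum_mem _ fun i _ => ?_
      exact mul_mem (pow_mem hg1 i) (pow_mem (intCast_mem _ a) _)
    rw [hsdef]
    exact add_mem (add_mem (mul_mem htm (sub_mem (natCast_mem _ n) (one_mem _)))
      (mul_mem htm (pow_mem hg1 _))) (mul_mem (intCast_mem _ a) (mul_mem htm hCm))
  -- key identity
  set Aq : ℚ := (a:ℚ) * ((n:ℚ) - 1 + (a:ℚ) ^ (k-1)) with hAqdef
  have key : (n:ℚ) * g n = Aq + (p:ℚ) ^ b * s := by
    rw [hrec, hAqdef, hsdef]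
    linear_combination (-(a:ℚ)) * hgeom - (((n:ℚ) - 1) + g (n-1) ^ (k-1) + (a:ℚ) * C) * hPt
  obtain ⟨A', hA'⟩ := hdvd
  have hAq : Aq = ((p:ℚ)) ^ ν * (A' : ℚ) := by
    rw [hAqdef]
    have h := congrArg (Int.cast : ℤ → ℚ) hA'
    push_cast at h
    linear_combination h
  have hnq : (n : ℚ) = (p:ℚ) ^ ν * (m : ℚ) := by rw [← hnm]; push_cast; ring
  have hPsplit : ((p:ℚ)) ^ b = (p:ℚ) ^ ν * (p:ℚ) ^ (b - ν) := by
    rw [← pow_add]; congr 1; omega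
  have hgn : g n = ((A' : ℚ) + (p:ℚ) ^ (b - ν) * s) / (m : ℚ) := by
    rw [eq_div_iff hmq0]
    apply mul_left_cancel₀ hPν0
    calc (p:ℚ) ^ ν * (g n * (m:ℚ)) = (n:ℚ) * g n := by rw [hnq]; ring
    _ = Aq + (p:ℚ) ^ b * s := key
    _ = (p:ℚ) ^ ν * ((A':ℚ) + (p:ℚ) ^ (b - ν) * s) := by rw [hAq, hPsplit]; ring
  have hmZ : ¬ (p:ℤ) ∣ (m : ℤ) := fun h => hm (Int.natCast_dvd_natCast.1 h)
  have hgnZ : InZp p (g n) := by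
    rw [hgn]
    have h3 : ((A' : ℚ) + (p:ℚ) ^ (b - ν) * s) ∈ GAux.Zp p hp :=
      add_mem (intCast_mem _ A') (mul_mem (pow_mem (natCast_mem _ p) _) hsZ)
    have h4 := GAux.inZp_div hp (B := (m : ℤ)) h3 hmZ
    simpa using h4
  refine ⟨hgnZ, ?_⟩
  intro hlt u hu
  have hQ0 : ((p:ℚ)) ^ (b - ν) ≠ 0 := pow_ne_zero _ hp0
  obtain ⟨w, hw⟩ : ((p:ℤ)) ^ (b - ν) ∣ 1 - (m : ℤ) * u := Int.ModEq.dvd hu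
  have hwq : (1 : ℚ) - (m : ℚ) * (u : ℚ) = (p:ℚ) ^ (b - ν) * (w : ℚ) := by
    have h := congrArg (Int.cast : ℤ → ℚ) hw
    push_cast at h
    linear_combination h
  show InZp p ((g n - Aq / (p:ℚ) ^ ν * (u:ℚ)) / (p:ℚ) ^ (b - ν))
  have h5 : Aq / (p:ℚ) ^ ν = (A' : ℚ) := by
    rw [hAq]; field_simp
  have hexpr : (g n - Aq / (p:ℚ) ^ ν * (u:ℚ)) / (p:ℚ) ^ (b - ν)
      = ((A' : ℚ) * (w : ℚ) + s) / (m : ℚ) := by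
    rw [hgn, h5, div_eq_div_iff hQ0 hmq0, sub_mul, div_mul_cancel₀ _ hmq0]
    linear_combination ((A':ℚ)) * hwq
  rw [hexpr]
  have hnum : ((A' : ℚ) * (w : ℚ) + s) ∈ GAux.Zp p hp :=
    add_mem (mul_mem (intCast_mem _ A') (intCast_mem _ w)) hsZ
  have h6 := GAux.inZp_div hp (B := (m : ℤ)) hnum hmZ
  simpa using h6
end

section
/- Let p be a prime and k ≥ 2. If g_{k,m} ∈ ℤ_(p) for all 1 ≤ m ≤ n-1 but p^{ν_p(n)} does not divide g_{k,n-1}(n-1+g_{k,n-1}^{k-1}) in ℤ_(p), then g_{k,n} ∉ ℤ_(p), and hence g_{k,n} is not an integer. -/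
theorem goebel_step_fails (p : ℕ) (hp : p.Prime) (k : ℕ) (hk : 2 ≤ k)
    (g : ℕ → ℚ) (hg : IsGobel k g) (n : ℕ) (hn : 2 ≤ n)
    (hint : ∀ m : ℕ, 1 ≤ m → m ≤ n - 1 → InZp p (g m))
    (hndvd : ¬ InZp p (g (n - 1) * ((n : ℚ) - 1 + g (n - 1) ^ (k - 1)) /
      (p : ℚ) ^ padicValNat p n)) :
    ¬ InZp p (g n) ∧ ¬ ∃ z : ℤ, g n = (z : ℚ) := by
  obtain ⟨h0, hrec⟩ := hg
  have hA := hrec n (by omega)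
  have hB := hrec (n - 1) (by omega)
  -- key recurrence
  have hX : g (n - 1) * ((n : ℚ) - 1 + g (n - 1) ^ (k - 1)) = (n : ℚ) * g n := by
    have hn' : n - 1 + 1 = n := by omega
    have hsum : (Finset.range n).sum (fun j => g j ^ k)
        = (Finset.range (n - 1)).sum (fun j => g j ^ k) + g (n - 1) ^ k := by
      rw [← hn', Finset.sum_range_succ]; simp
    have hcast : ((n - 1 : ℕ) : ℚ) = (n : ℚ) - 1 := by
      have h1 : (1 : ℕ) ≤ n := by omega
      push_cast [Nat.cast_sub h1]; ring
    have hpow : g (n - 1) ^ k = g (n - 1) ^ (k - 1) * g (n - 1) := by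
      have hk1 : k - 1 + 1 = k := by omega
      rw [← hk1, pow_succ]; norm_num
    rw [hcast] at hB
    have hthis : (n : ℚ) * g n = ((n : ℚ) - 1) * g (n - 1) + g (n - 1) ^ k := by
      linear_combination hA + hsum - hB
    linear_combination -hthis - hpow
  have key : ¬ InZp p (g n) := by
    intro h
    apply hndvd
    set v := padicValNat p n with hv
    set u := n / p ^ v with hu
    have hn0 : n ≠ 0 := by omega
    have hvf : n.factorization p = v := Nat.factorization_def n hp
    have hdecomp : p ^ v * u = n := by
      have := Nat.ordProj_mul_ordCompl_eq_self n p
      rwa [hvf] at this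
    have hpu : ¬ p ∣ u := by
      have := Nat.not_dvd_ordCompl hp hn0
      rwa [hvf] at this
    have hp0 : (p : ℚ) ≠ 0 := by exact_mod_cast hp.pos.ne'
    have heq : g (n - 1) * ((n : ℚ) - 1 + g (n - 1) ^ (k - 1)) / (p : ℚ) ^ v
        = (u : ℚ) * g n := by
      rw [hX]
      have : (n : ℚ) = (p : ℚ) ^ v * (u : ℚ) := by
        exact_mod_cast congrArg (Nat.cast : ℕ → ℚ) hdecomp.symm
      rw [this]
      field_simp
    rw [heq]
    intro hd
    have hdvd : ((u : ℚ) * g n).den ∣ (u : ℚ).den * (g n).den := Rat.mul_den_dvd _ _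
    rw [Rat.den_natCast, one_mul] at hdvd
    exact h (hd.trans hdvd)
  refine ⟨key, ?_⟩
  rintro ⟨z, hz⟩
  apply key
  rw [hz]
  unfold InZp
  rw [Rat.den_intCast]
  exact hp.not_dvd_one
end
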